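/- The Gaussian Q-function satisfies Q(t) = (1/π) ∫_0^{π/2} exp(-t²/(2 sin²x)) dx for all t ≥ 0 (Craig's formula). -/

import Mathlib

open Real MeasureTheory

noncomputable def gaussianQ (t : ℝ) : ℝ :=
  (Real.sqrt (2 * Real.pi))⁻¹ * ∫ u in Set.Ioi t, Real.exp (-u ^ 2 / 2)

/-!
Write `exp (-t² / (2 cos² x))` as `∫_t^∞ (u / cos² x) exp (-u² / (2 cos² x)) du` and exchange the
order of integration. In the inner integral over `x` substitute `v = u tan x`: since
`1 / cos² x = 1 + tan² x` it becomes `∫_0^∞ exp (-(u² + v²) / 2) dv = √(2π) / 2 · exp (-u² / 2)`,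
and integrating over `u > t` gives `π Q(t)`. The reflection `x ↦ π / 2 - x` turns `cos` into `sin`.
-/

open Set Filter Topology

theorem integral_Ioi_div_mul_exp_neg_sq_div {s t : ℝ} (hs : 0 < s) (ht : 0 ≤ t) :
    ∫ u in Ioi t, u / s * exp (-u ^ 2 / (2 * s)) = exp (-t ^ 2 / (2 * s)) := by
  have hderiv : ∀ u ∈ Ici t, HasDerivAt (fun u ↦ -exp (-u ^ 2 / (2 * s)))
      (u / s * exp (-u ^ 2 / (2 * s))) u := fun u _ ↦ by
    have h : HasDerivAt (fun u ↦ -u ^ 2 / (2 * s)) (-(2 * u ^ 1) / (2 * s)) u :=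
      (hasDerivAt_pow 2 u).neg.div_const (2 * s)
    refine h.exp.neg.congr_deriv ?_
    field_simp
  have hnonneg : ∀ u ∈ Ioi t, 0 ≤ u / s * exp (-u ^ 2 / (2 * s)) := fun u hu ↦
    mul_nonneg (div_nonneg (ht.trans hu.le) hs.le) (exp_pos _).le
  have hlim : Tendsto (fun u ↦ -exp (-u ^ 2 / (2 * s))) atTop (𝓝 0) := by
    have h := tendsto_exp_neg_atTop_nhds_zero.comp
      ((tendsto_pow_atTop two_ne_zero).atTop_div_const (by positivity : 0 < 2 * s))
    simpa [Function.comp_def, neg_div] using h.neg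
  simpa using integral_Ioi_of_hasDerivAt_of_nonneg' hderiv hnonneg hlim

theorem cos_pos_of_mem_Ioo_zero_pi_div_two {x : ℝ} (hx : x ∈ Ioo 0 (π / 2)) : 0 < cos x :=
  cos_pos_of_mem_Ioo ⟨by linarith [pi_pos, hx.1], hx.2⟩

theorem image_tan_Ioo_zero_pi_div_two : tan '' Ioo 0 (π / 2) = Ioi 0 := by
  refine Subset.antisymm ?_ fun y hy ↦ ?_
  · rintro _ ⟨x, hx, rfl⟩
    exact tan_pos_of_pos_of_lt_pi_div_two hx.1 hx.2
  · exact ⟨arctan y, ⟨arctan_pos.2 hy, arctan_lt_pi_div_two y⟩, tan_arctan y⟩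

theorem image_const_mul_tan_Ioo {c : ℝ} (hc : 0 < c) :
    (fun x ↦ c * tan x) '' Ioo 0 (π / 2) = Ioi 0 := by
  rw [← image_image (c * ·) tan, image_tan_Ioo_zero_pi_div_two, image_mul_left_Ioi hc, mul_zero]

theorem injOn_const_mul_tan {c : ℝ} (hc : c ≠ 0) :
    InjOn (fun x ↦ c * tan x) (Ioo 0 (π / 2)) := fun x hx y hy hxy ↦
  injOn_tan ⟨by linarith [pi_pos, hx.1], hx.2⟩ ⟨by linarith [pi_pos, hy.1], hy.2⟩
    (mul_left_cancel₀ hc hxy)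

theorem hasDerivWithinAt_const_mul_tan_Ioo (c : ℝ) :
    ∀ x ∈ Ioo 0 (π / 2),
      HasDerivWithinAt (fun x ↦ c * tan x) (c / cos x ^ 2) (Ioo 0 (π / 2)) x := fun _ hx ↦
  ((hasDerivAt_tan (cos_pos_of_mem_Ioo_zero_pi_div_two hx).ne').const_mul c).congr_deriv
    (mul_one_div _ _) |>.hasDerivWithinAt

section TanSubstitution

variable {E : Type*} [NormedAddCommGroup E] [NormedSpace ℝ E] {c : ℝ}

theorem integrableOn_Ioo_const_mul_tan_iff (hc : 0 < c) {g : ℝ → E} :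
    IntegrableOn (fun x ↦ (c / cos x ^ 2) • g (c * tan x)) (Ioo 0 (π / 2)) ↔
      IntegrableOn g (Ioi 0) := by
  rw [← image_const_mul_tan_Ioo hc,
    integrableOn_image_iff_integrableOn_abs_deriv_smul measurableSet_Ioo
      (hasDerivWithinAt_const_mul_tan_Ioo c) (injOn_const_mul_tan hc.ne')]
  refine integrableOn_congr_fun (fun x hx ↦ ?_) measurableSet_Ioo
  rw [abs_of_pos (div_pos hc (pow_pos (cos_pos_of_mem_Ioo_zero_pi_div_two hx) 2))]

theorem integral_Ioo_const_mul_tan (hc : 0 < c) (g : ℝ → E) :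
    ∫ x in Ioo 0 (π / 2), (c / cos x ^ 2) • g (c * tan x) = ∫ y in Ioi 0, g y := by
  rw [← image_const_mul_tan_Ioo hc,
    integral_image_eq_integral_abs_deriv_smul measurableSet_Ioo
      (hasDerivWithinAt_const_mul_tan_Ioo c) (injOn_const_mul_tan hc.ne')]
  refine setIntegral_congr_fun measurableSet_Ioo (fun x hx ↦ ?_)
  rw [abs_of_pos (div_pos hc (pow_pos (cos_pos_of_mem_Ioo_zero_pi_div_two hx) 2))]

end TanSubstitution

theorem exp_neg_sq_add_sq_div_two (u v : ℝ) :
    exp (-(u ^ 2 + v ^ 2) / 2) = exp (-u ^ 2 / 2) * exp (-(1 / 2) * v ^ 2) := by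
  rw [← exp_add]
  ring_nf

theorem integrableOn_Ioi_exp_neg_sq_add_sq_div_two (u : ℝ) :
    IntegrableOn (fun v ↦ exp (-(u ^ 2 + v ^ 2) / 2)) (Ioi 0) := by
  simp_rw [exp_neg_sq_add_sq_div_two u]
  exact ((integrable_exp_neg_mul_sq one_half_pos).const_mul _).integrableOn

theorem integral_Ioi_exp_neg_sq_add_sq_div_two (u : ℝ) :
    ∫ v in Ioi 0, exp (-(u ^ 2 + v ^ 2) / 2) = √(2 * π) / 2 * exp (-u ^ 2 / 2) := by
  simp_rw [exp_neg_sq_add_sq_div_two u]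
  rw [integral_const_mul, integral_gaussian_Ioi, show π / (1 / 2) = 2 * π by ring]
  ring

noncomputable def craigKernel (u x : ℝ) : ℝ :=
  u / cos x ^ 2 * exp (-u ^ 2 / (2 * cos x ^ 2))

theorem craigKernel_eq_smul (u : ℝ) {x : ℝ} (hx : cos x ≠ 0) :
    craigKernel u x = (u / cos x ^ 2) • exp (-(u ^ 2 + (u * tan x) ^ 2) / 2) := by
  rw [craigKernel, smul_eq_mul, ← inv_one_add_tan_sq hx]
  congr 2
  field_simp

theorem integrableOn_craigKernel {u : ℝ} (hu : 0 < u) :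
    IntegrableOn (craigKernel u) (Ioo 0 (π / 2)) :=
  ((integrableOn_Ioo_const_mul_tan_iff hu).2
    (integrableOn_Ioi_exp_neg_sq_add_sq_div_two u)).congr_fun
    (fun _ hx ↦ (craigKernel_eq_smul u (cos_pos_of_mem_Ioo_zero_pi_div_two hx).ne').symm)
    measurableSet_Ioo

theorem integral_craigKernel {u : ℝ} (hu : 0 < u) :
    ∫ x in Ioo 0 (π / 2), craigKernel u x = √(2 * π) / 2 * exp (-u ^ 2 / 2) := by
  rw [← integral_Ioi_exp_neg_sq_add_sq_div_two, ← integral_Ioo_const_mul_tan hu]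
  exact setIntegral_congr_fun measurableSet_Ioo
    (fun x hx ↦ craigKernel_eq_smul u (cos_pos_of_mem_Ioo_zero_pi_div_two hx).ne')

theorem integrable_craigKernel {t : ℝ} (ht : 0 ≤ t) :
    Integrable (Function.uncurry craigKernel)
      ((volume.restrict (Ioi t)).prod (volume.restrict (Ioo 0 (π / 2)))) := by
  have hmeas : Measurable (Function.uncurry craigKernel) := by
    unfold craigKernel Function.uncurry
    fun_prop
  refine (integrable_prod_iff hmeas.aestronglyMeasurable).2 ⟨?_, ?_⟩
  · filter_upwards [ae_restrict_mem measurableSet_Ioi] with u hu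
    exact integrableOn_craigKernel (ht.trans_lt hu)
  · have hgauss : IntegrableOn (fun u ↦ √(2 * π) / 2 * exp (-u ^ 2 / 2)) (Ioi t) := by
      simpa [neg_div, div_eq_inv_mul] using
        ((integrable_exp_neg_mul_sq one_half_pos).const_mul (√(2 * π) / 2)).integrableOn
    refine hgauss.congr_fun (fun u hu ↦ ?_) measurableSet_Ioi
    have hu : 0 < u := ht.trans_lt hu
    dsimp only
    rw [← integral_craigKernel hu]
    refine setIntegral_congr_fun measurableSet_Ioo (fun x _ ↦ ?_)
    exact (norm_of_nonneg (by unfold craigKernel; positivity)).symm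

theorem integral_Ioo_exp_neg_sq_div_cos_sq {t : ℝ} (ht : 0 ≤ t) :
    ∫ x in Ioo 0 (π / 2), exp (-t ^ 2 / (2 * cos x ^ 2)) = π * gaussianQ t := by
  calc ∫ x in Ioo 0 (π / 2), exp (-t ^ 2 / (2 * cos x ^ 2))
      = ∫ x in Ioo 0 (π / 2), ∫ u in Ioi t, craigKernel u x :=
        setIntegral_congr_fun measurableSet_Ioo fun x hx ↦ (integral_Ioi_div_mul_exp_neg_sq_div
          (pow_pos (cos_pos_of_mem_Ioo_zero_pi_div_two hx) 2) ht).symm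
    _ = ∫ u in Ioi t, ∫ x in Ioo 0 (π / 2), craigKernel u x :=
        (integral_integral_swap (integrable_craigKernel ht)).symm
    _ = ∫ u in Ioi t, √(2 * π) / 2 * exp (-u ^ 2 / 2) :=
        setIntegral_congr_fun measurableSet_Ioi fun u hu ↦ integral_craigKernel (ht.trans_lt hu)
    _ = π * gaussianQ t := by
        have hsqrt : √(2 * π) ^ 2 = 2 * π := sq_sqrt (by positivity)
        rw [integral_const_mul, gaussianQ, ← mul_assoc]
        congr 1
        field_simp
        linear_combination hsqrt

theorem stmt_4 (t : ℝ) (ht : 0 ≤ t) :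
    gaussianQ t =
      (1 / Real.pi) * ∫ x in (0 : ℝ)..(Real.pi / 2),
        Real.exp (-t ^ 2 / (2 * Real.sin x ^ 2)) := by
  have hreflect := intervalIntegral.integral_comp_sub_left
    (fun x ↦ exp (-t ^ 2 / (2 * sin x ^ 2))) (a := 0) (b := π / 2) (π / 2)
  simp only [sin_pi_div_two_sub, sub_self, sub_zero] at hreflect
  rw [← hreflect, intervalIntegral.integral_of_le (by positivity), integral_Ioc_eq_integral_Ioo,
    integral_Ioo_exp_neg_sq_div_cos_sq ht]
  field_simp
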